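/- For a binary linear code C with even minimum distance d, every codeword c ∈ C of weight d satisfies |LH^-(c)| = (1/2)·C(d, d/2), where LH^-(c) is the set of larger halves of c of weight d/2 and C(m,r) denotes the binomial coefficient. -/

import Mathlib

/-- Support of a binary vector: the set of nonzero coordinates. -/
def supp {n : ℕ} (x : Fin n → ZMod 2) : Finset (Fin n) :=
  Finset.univ.filter (fun i => x i ≠ 0)

/-- Hamming weight. -/
def wt {n : ℕ} (x : Fin n → ZMod 2) : ℕ := (supp x).card

/-- Numerical value v(x) = Σ_{i=1}^n x_i 2^(n-i) (0-based: exponent n-1-i). -/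
def nval {n : ℕ} (x : Fin n → ZMod 2) : ℕ :=
  ∑ i : Fin n, (x i).val * 2 ^ (n - 1 - (i : ℕ))

/-- The total order ⪯ : first by weight, ties broken by numerical value. -/
def ple {n : ℕ} (x y : Fin n → ZMod 2) : Prop :=
  wt x < wt y ∨ (wt x = wt y ∧ nval x ≤ nval y)

/-- The strict version ≺ of ⪯. -/
def plt {n : ℕ} (x y : Fin n → ZMod 2) : Prop := ple x y ∧ x ≠ y

/-- Covering order: x ⊆ y iff S(x) ⊆ S(y). -/
def covers {n : ℕ} (x y : Fin n → ZMod 2) : Prop := supp x ⊆ supp y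

/-- v is the coset leader of its coset of C, i.e. the ⪯-minimum element
(u ranges over the coset of v: u + v ∈ C). -/
def IsCosetLeader {n : ℕ} (C : Submodule (ZMod 2) (Fin n → ZMod 2))
    (v : Fin n → ZMod 2) : Prop :=
  ∀ u, u + v ∈ C → ple v u

/-- E⁰(C): the set of correctable errors (coset leaders). -/
def E0 {n : ℕ} (C : Submodule (ZMod 2) (Fin n → ZMod 2)) : Set (Fin n → ZMod 2) :=
  {v | IsCosetLeader C v}

/-- E¹(C): the set of uncorrectable errors. -/
def E1 {n : ℕ} (C : Submodule (ZMod 2) (Fin n → ZMod 2)) : Set (Fin n → ZMod 2) :=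
  {v | ¬ IsCosetLeader C v}

/-- M¹(C): the ⊆-minimal elements of E¹(C). -/
def M1 {n : ℕ} (C : Submodule (ZMod 2) (Fin n → ZMod 2)) : Set (Fin n → ZMod 2) :=
  {v ∈ E1 C | ∀ u ∈ E1 C, covers u v → u = v}

/-- v is a larger half of c: v is ⊆-minimal among vectors u with u + c ≺ u. -/
def IsLH {n : ℕ} (c v : Fin n → ZMod 2) : Prop :=
  plt (v + c) v ∧ ∀ u, plt (u + c) u → covers u v → u = v

/-- LH(c): the set of larger halves of c. -/
def LH {n : ℕ} (c : Fin n → ZMod 2) : Set (Fin n → ZMod 2) := {v | IsLH c v}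

/-- LH(U) = ∪_{c ∈ U} LH(c). -/
def LHset {n : ℕ} (U : Set (Fin n → ZMod 2)) : Set (Fin n → ZMod 2) :=
  ⋃ c ∈ U, LH c

/-- LH⁻(c): larger halves of c of weight w(c)/2 (for even-weight c). -/
def LHm {n : ℕ} (c : Fin n → ZMod 2) : Set (Fin n → ZMod 2) :=
  {v ∈ LH c | 2 * wt v = wt c}

/-- A_i(U): elements of U of weight i. -/
def Aw {n : ℕ} (U : Set (Fin n → ZMod 2)) (i : ℕ) : Set (Fin n → ZMod 2) :=
  {v ∈ U | wt v = i}

/-- C has minimum distance d. -/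
def HasMinDist {n : ℕ} (C : Submodule (ZMod 2) (Fin n → ZMod 2)) (d : ℕ) : Prop :=
  (∃ c ∈ C, c ≠ 0 ∧ wt c = d) ∧ ∀ c ∈ C, c ≠ 0 → d ≤ wt c

/-- T is a trial set for C. -/
def IsTrialSet {n : ℕ} (C : Submodule (ZMod 2) (Fin n → ZMod 2))
    (T : Set (Fin n → ZMod 2)) : Prop :=
  T ⊆ (C : Set (Fin n → ZMod 2)) \ {0} ∧ M1 C ⊆ LHset T

/-- l(x) = min S(x), the leftmost nonzero coordinate (⊤ if x = 0). -/
def lm {n : ℕ} (x : Fin n → ZMod 2) : WithTop (Fin n) := (supp x).min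

/-- The coordinatewise "and" of two vectors: support is S(x) ∩ S(y). -/
def vand {n : ℕ} (x y : Fin n → ZMod 2) : Fin n → ZMod 2 := fun i => x i * y i

lemma mem_supp' {n : ℕ} {x : Fin n → ZMod 2} {i : Fin n} : i ∈ supp x ↔ x i = 1 := by
  have h : ∀ a : ZMod 2, a ≠ 0 ↔ a = 1 := by decide
  simp [supp, h]

lemma eq_of_supp_eq' {n : ℕ} {x y : Fin n → ZMod 2} (h : supp x = supp y) : x = y := by
  funext i
  have h2 : ∀ a : ZMod 2, a = 0 ∨ a = 1 := by decide
  by_cases hi : i ∈ supp x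
  · rw [mem_supp'.mp hi]
    exact ((mem_supp' (x := y)).mp (h ▸ hi)).symm
  · have hi' : i ∉ supp y := h ▸ hi
    have hx0 : x i = 0 := by
      rcases h2 (x i) with h' | h'
      · exact h'
      · exact absurd (mem_supp'.mpr h') hi
    have hy0 : y i = 0 := by
      rcases h2 (y i) with h' | h'
      · exact h'
      · exact absurd (mem_supp'.mpr h') hi'
    rw [hx0, hy0]

lemma supp_add' {n : ℕ} (x y : Fin n → ZMod 2) : supp (x + y) = symmDiff (supp x) (supp y) := by
  ext i
  have h : ∀ a b : ZMod 2, (a + b ≠ 0 ↔ (a ≠ 0 ∧ ¬ b ≠ 0) ∨ (b ≠ 0 ∧ ¬ a ≠ 0)) := by decide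
  simp only [supp, Finset.mem_symmDiff, Finset.mem_filter, Finset.mem_univ, true_and,
    Pi.add_apply]
  exact h (x i) (y i)

lemma card_symmDiff' {α : Type*} [DecidableEq α] (s t : Finset α) :
    (symmDiff s t).card + 2 * (s ∩ t).card = s.card + t.card := by
  rw [symmDiff_eq_sup_sdiff_inf]
  have h1 : (s ∩ t) ⊆ (s ∪ t) := Finset.inter_subset_left.trans Finset.subset_union_left
  have h2 := Finset.card_sdiff_of_subset (s := s ∩ t) (t := s ∪ t) h1
  have h3 := Finset.card_union_add_card_inter s t
  have h4 := Finset.card_le_card h1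
  simp only [Finset.sup_eq_union, Finset.inf_eq_inter]
  omega

lemma range_two_pow_lt' (m : ℕ) : ∑ k ∈ Finset.range m, 2 ^ k < 2 ^ m := by
  induction m with
  | zero => simp
  | succ m ih =>
    rw [Finset.sum_range_succ]
    have : 2 ^ (m + 1) = 2 ^ m + 2 ^ m := by ring
    omega

lemma sum_two_pow_lt' {α : Type*} (s : Finset α) (f : α → ℕ) (m : ℕ)
    (hinj : Set.InjOn f s) (hlt : ∀ i ∈ s, f i < m) :
    ∑ i ∈ s, 2 ^ (f i) < 2 ^ m := by
  classical
  calc ∑ i ∈ s, 2 ^ f i = ∑ k ∈ s.image f, 2 ^ k :=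
        (Finset.sum_image (fun a ha b hb h => hinj ha hb h)).symm
    _ ≤ ∑ k ∈ Finset.range m, 2 ^ k := by
        apply Finset.sum_le_sum_of_subset
        intro k hk
        simp only [Finset.mem_image] at hk
        obtain ⟨i, hi, rfl⟩ := hk
        exact Finset.mem_range.mpr (hlt i hi)
    _ < 2 ^ m := range_two_pow_lt' m

lemma nval_lt' {n : ℕ} (x y : Fin n → ZMod 2) (j : Fin n)
    (hagree : ∀ i : Fin n, i < j → x i = y i) (hx : x j = 0) (hy : y j = 1) :
    nval x < nval y := by
  classical
  have hval : ∀ a : ZMod 2, a.val ≤ 1 := by decide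
  have hins : Finset.univ.filter (fun i : Fin n => ¬ i < j)
      = insert j (Finset.univ.filter (fun i => j < i)) := by
    ext i
    simp only [Finset.mem_filter, Finset.mem_univ, true_and, Finset.mem_insert, not_lt]
    constructor
    · intro h
      rcases eq_or_lt_of_le h with h' | h'
      · exact Or.inl h'.symm
      · exact Or.inr h'
    · rintro (rfl | h)
      · exact le_refl _
      · exact le_of_lt h
  have hjnot : j ∉ Finset.univ.filter (fun i : Fin n => j < i) := by simp
  have hsplit : ∀ z : Fin n → ZMod 2, nval z =
      (∑ i ∈ Finset.univ.filter (fun i : Fin n => i < j), (z i).val * 2 ^ (n - 1 - (i:ℕ)))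
      + ((z j).val * 2 ^ (n - 1 - (j:ℕ))
        + ∑ i ∈ Finset.univ.filter (fun i : Fin n => j < i), (z i).val * 2 ^ (n - 1 - (i:ℕ))) := by
    intro z
    rw [nval, ← Finset.sum_filter_add_sum_filter_not Finset.univ (fun i : Fin n => i < j)]
    congr 1
    rw [hins, Finset.sum_insert hjnot]
  have hA : ∑ i ∈ Finset.univ.filter (fun i : Fin n => i < j), (x i).val * 2 ^ (n - 1 - (i:ℕ))
      = ∑ i ∈ Finset.univ.filter (fun i : Fin n => i < j), (y i).val * 2 ^ (n - 1 - (i:ℕ)) := by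
    apply Finset.sum_congr rfl
    intro i hi
    simp only [Finset.mem_filter] at hi
    rw [hagree i hi.2]
  have hBx : ∑ i ∈ Finset.univ.filter (fun i : Fin n => j < i), (x i).val * 2 ^ (n - 1 - (i:ℕ))
      < 2 ^ (n - 1 - (j:ℕ)) := by
    calc ∑ i ∈ Finset.univ.filter (fun i : Fin n => j < i), (x i).val * 2 ^ (n - 1 - (i:ℕ))
        ≤ ∑ i ∈ Finset.univ.filter (fun i : Fin n => j < i), 2 ^ (n - 1 - (i:ℕ)) := by
          apply Finset.sum_le_sum
          intro i _
          calc (x i).val * 2 ^ (n - 1 - (i:ℕ)) ≤ 1 * 2 ^ (n - 1 - (i:ℕ)) :=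
                Nat.mul_le_mul_right _ (hval _)
            _ = 2 ^ (n - 1 - (i:ℕ)) := one_mul _
      _ < 2 ^ (n - 1 - (j:ℕ)) := by
          apply sum_two_pow_lt'
          · intro a ha b hb hab
            have ha' : (a : ℕ) < n := a.isLt
            have hb' : (b : ℕ) < n := b.isLt
            have hab2 : n - 1 - (a : ℕ) = n - 1 - (b : ℕ) := hab
            exact Fin.ext (by omega)
          · intro i hi
            simp only [Finset.mem_filter, Finset.mem_univ, true_and, Fin.lt_def] at hi
            have : (i : ℕ) < n := i.isLt
            have : (j : ℕ) < n := j.isLt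
            omega
  have hxj : (x j).val = 0 := by rw [hx]; rfl
  have hyj : (y j).val = 1 := by rw [hy]; rfl
  have h1 := hsplit x
  have h2 := hsplit y
  rw [hxj] at h1
  rw [hyj] at h2
  have hBy : 0 ≤ ∑ i ∈ Finset.univ.filter (fun i : Fin n => j < i), (y i).val * 2 ^ (n - 1 - (i:ℕ)) :=
    Nat.zero_le _
  omega

lemma card_filter_powerset' {α : Type*} [DecidableEq α] (S : Finset α) (l : α) (hl : l ∈ S)
    (k : ℕ) (hk : 0 < k) :
    ((S.powersetCard k).filter (fun T => l ∈ T)).card = (S.card - 1).choose (k - 1) := by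
  rw [← Finset.card_erase_of_mem hl, ← Finset.card_powersetCard]
  apply Finset.card_nbij' (fun T => T.erase l) (fun T => insert l T)
  · intro T hT
    simp only [Finset.mem_coe, Finset.mem_filter, Finset.mem_powersetCard] at hT
    obtain ⟨⟨hTS, hTc⟩, hlT⟩ := hT
    rw [Finset.mem_coe, Finset.mem_powersetCard]
    exact ⟨Finset.erase_subset_erase l hTS, by rw [Finset.card_erase_of_mem hlT, hTc]⟩
  · intro T hT
    rw [Finset.mem_coe, Finset.mem_powersetCard] at hT
    obtain ⟨hTS, hTc⟩ := hT
    have hlT : l ∉ T := fun h => (Finset.mem_erase.mp (hTS h)).1 rfl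
    simp only [Finset.mem_coe, Finset.mem_filter, Finset.mem_powersetCard]
    refine ⟨⟨?_, ?_⟩, Finset.mem_insert_self l T⟩
    · intro x hx
      rcases Finset.mem_insert.mp hx with rfl | hx'
      · exact hl
      · exact (Finset.erase_subset l S) (hTS hx')
    · rw [Finset.card_insert_of_notMem hlT, hTc]
      omega
  · intro T hT
    simp only [Finset.mem_coe, Finset.mem_filter] at hT
    exact Finset.insert_erase hT.2
  · intro T hT
    rw [Finset.mem_coe, Finset.mem_powersetCard] at hT
    have hlT : l ∉ T := fun h => (Finset.mem_erase.mp (hT.1 h)).1 rfl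
    exact Finset.erase_insert hlT


/-- |LH⁻(c)| = (1/2)·C(d, d/2) for every codeword c of weight d,
d even. -/
theorem stmt12 {n : ℕ} (C : Submodule (ZMod 2) (Fin n → ZMod 2)) (d : ℕ)
    (hd : HasMinDist C d) (heven : Even d)
    (c : Fin n → ZMod 2) (hc : c ∈ C) (hw : wt c = d) :
    ((LHm c).ncard : ℚ) = (1 / 2 : ℚ) * (Nat.choose d (d / 2) : ℚ) := by
  classical
  have hzcases : ∀ a : ZMod 2, a = 0 ∨ a = 1 := by decide
  have hsupp0 : supp (0 : Fin n → ZMod 2) = ∅ := by ext i; simp [supp]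
  obtain ⟨⟨c₀, hc₀C, hc₀ne, hc₀w⟩, _⟩ := hd
  have hd0 : d ≠ 0 := by
    intro h
    apply hc₀ne
    apply eq_of_supp_eq'
    rw [hsupp0]
    exact Finset.card_eq_zero.mp (by rw [h] at hc₀w; exact hc₀w)
  have hcne : c ≠ 0 := by
    intro h
    apply hd0
    rw [← hw, h, wt, hsupp0]
    rfl
  set m := d / 2 with hmdef
  have hm2 : 2 * m = d := by obtain ⟨r, hr⟩ := heven; omega
  have hmpos : 0 < m := by omega
  have hSne : (supp c).Nonempty := by
    rw [Finset.nonempty_iff_ne_empty]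
    intro h
    exact hcne (eq_of_supp_eq' (by rw [h, hsupp0]))
  set S := supp c with hSdef
  set l := S.min' hSne with hldef
  have hlS : l ∈ S := S.min'_mem hSne
  have hcl : c l = 1 := mem_supp'.mp hlS
  have hlmin : ∀ i ∈ S, l ≤ i := fun i hi => S.min'_le i hi
  have hScard : S.card = d := hw
  have hagree : ∀ v : Fin n → ZMod 2, ∀ i : Fin n, i < l → (v + c) i = v i := by
    intro v i hi
    have hiS : i ∉ S := fun h => absurd (hlmin i h) (not_le.mpr hi)
    have hci : c i = 0 := by
      by_contra h'
      exact hiS (Finset.mem_filter.mpr ⟨Finset.mem_univ _, h'⟩)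
    simp [Pi.add_apply, hci]
  have hwadd : ∀ u : Fin n → ZMod 2, supp u ⊆ S →
      wt (u + c) = d - wt u ∧ supp (u + c) = S \ supp u := by
    intro u hu
    have h1 : supp (u + c) = symmDiff (supp u) S := supp_add' u c
    have h2 : symmDiff (supp u) S = S \ supp u := by
      rw [symmDiff_eq_sup_sdiff_inf, Finset.sup_eq_union, Finset.inf_eq_inter,
        Finset.union_eq_right.mpr hu, Finset.inter_eq_left.mpr hu]
    refine ⟨?_, by rw [h1, h2]⟩
    rw [wt, h1, h2, Finset.card_sdiff_of_subset hu, hScard]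
    rfl
  have key : ∀ v : Fin n → ZMod 2, v ∈ LHm c ↔ supp v ⊆ S ∧ wt v = m ∧ l ∈ supp v := by
    intro v
    have hmem : v ∈ LHm c ↔
        ((plt (v + c) v ∧ ∀ u, plt (u + c) u → covers u v → u = v) ∧ 2 * wt v = wt c) :=
      Iff.rfl
    rw [hmem]
    constructor
    · rintro ⟨⟨hplt, hmin⟩, h2w⟩
      rw [hw] at h2w
      have hwv : wt v = m := by omega
      have hsd := card_symmDiff' (supp v) S
      have hwvc : wt (v + c) = (symmDiff (supp v) S).card := by rw [wt, supp_add']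
      have hkle : (supp v ∩ S).card ≤ wt v := Finset.card_le_card Finset.inter_subset_left
      have hwtv : (supp v).card = wt v := rfl
      rcases hplt.1 with hlt | ⟨heq, hle⟩
      · exfalso; omega
      · have hk : (supp v ∩ S).card = wt v := by omega
        have hsub : supp v ⊆ S := Finset.inter_eq_left.mp
          (Finset.eq_of_subset_of_card_le Finset.inter_subset_left (by omega))
        refine ⟨hsub, hwv, ?_⟩
        by_contra hlv
        have hvl0 : v l = 0 := by
          rcases hzcases (v l) with h' | h'
          · exact h'
          · exact absurd (mem_supp'.mpr h') hlv
        have hvcl : (v + c) l = 1 := by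
          have : (v + c) l = v l + c l := rfl
          rw [this, hvl0, hcl, zero_add]
        have hlt2 := nval_lt' v (v + c) l (fun i hi => (hagree v i hi).symm) hvl0 hvcl
        omega
    · rintro ⟨hsub, hwv, hlv⟩
      have hvl1 : v l = 1 := mem_supp'.mp hlv
      obtain ⟨hwvc, hsupvc⟩ := hwadd v hsub
      have hvcl0 : (v + c) l = 0 := by
        have : (v + c) l = v l + c l := rfl
        rw [this, hvl1, hcl]
        decide
      have hplt : plt (v + c) v := by
        constructor
        · right
          refine ⟨by omega, le_of_lt ?_⟩
          exact nval_lt' (v + c) v l (fun i hi => hagree v i hi) hvcl0 hvl1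
        · intro h
          apply hcne
          have := congrArg (fun z => z - v) h
          simpa using this
      refine ⟨⟨hplt, ?_⟩, by rw [hw]; omega⟩
      intro u hu hcov
      have husub : supp u ⊆ S := Finset.Subset.trans hcov hsub
      have huw : wt u ≤ m := by rw [← hwv]; exact Finset.card_le_card hcov
      obtain ⟨huwc, _⟩ := hwadd u husub
      have huwd : wt u ≤ d := by omega
      rcases hu.1 with hlt | ⟨heq, _⟩
      · exfalso; omega
      · have hum : wt u = m := by omega
        exact eq_of_supp_eq' (Finset.eq_of_subset_of_card_le hcov (by
          show (supp v).card ≤ (supp u).card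
          have h1 : (supp v).card = m := hwv
          have h2 : (supp u).card = m := hum
          omega))
  let e : Finset (Fin n) → (Fin n → ZMod 2) := fun T i => if i ∈ T then 1 else 0
  have hsupe : ∀ T, supp (e T) = T := by
    intro T
    ext i
    rw [mem_supp']
    by_cases h : i ∈ T <;> simp [e, h]
  let F := ((S.powersetCard m).filter (fun T => l ∈ T)).image e
  have hset : LHm c = ↑F := by
    ext v
    rw [key v]
    simp only [F, Finset.coe_image, Set.mem_image, Finset.mem_coe, Finset.mem_filter,
      Finset.mem_powersetCard]
    constructor
    · rintro ⟨h1, h2, h3⟩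
      exact ⟨supp v, ⟨⟨h1, h2⟩, h3⟩, eq_of_supp_eq' (by rw [hsupe])⟩
    · rintro ⟨T, ⟨⟨hT1, hT2⟩, hT3⟩, rfl⟩
      rw [hsupe]
      exact ⟨hT1, by rw [wt, hsupe T]; exact hT2, hT3⟩
  have hcard : (LHm c).ncard = (d - 1).choose (m - 1) := by
    rw [hset, Set.ncard_coe_finset]
    rw [Finset.card_image_of_injective _ (fun T T' h => by rw [← hsupe T, ← hsupe T', h])]
    rw [card_filter_powerset' S l hlS m hmpos, hScard]
  rw [hcard]
  have hid := Nat.add_one_mul_choose_eq (d - 1) (m - 1)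
  have h1 : d - 1 + 1 = d := Nat.succ_pred_eq_of_pos (Nat.pos_of_ne_zero hd0)
  have h2 : m - 1 + 1 = m := Nat.succ_pred_eq_of_pos hmpos
  rw [h1, h2] at hid
  have hidQ : (d : ℚ) * ((d - 1).choose (m - 1) : ℚ) = (d.choose m : ℚ) * m := by
    exact_mod_cast hid
  have hdQ : (d : ℚ) = 2 * m := by exact_mod_cast hm2.symm
  have hmQ : (m : ℚ) ≠ 0 := Nat.cast_ne_zero.mpr (by omega)
  rw [hdQ] at hidQ
  have h2X : 2 * ((d - 1).choose (m - 1) : ℚ) = (d.choose m : ℚ) := by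
    have := mul_right_cancel₀ hmQ (by linarith : 2 * ((d - 1).choose (m - 1) : ℚ) * m = (d.choose m : ℚ) * m)
    exact this
  linarith
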